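/- For every j ≥ 1 and every k with j < k ≤ 2j−1, the coefficient c^j_k of t^k in g_j is given explicitly by c^j_k = (k−1)!/((2j−k−1)! · 2^{k−j} · (k−j)!); equivalently, 2^{k−j}·(k−j)!·(2j−k−1)!·c^j_k = (k−1)!. -/
import Mathlib

open Polynomial

/-- The polynomials `g_j`, defined by `g_0 = 1` and `g_{j+1}(t) = t³ g_j'(t) + t g_j(t)`. -/
noncomputable def g : ℕ → Polynomial ℤ
  | 0 => 1
  | j + 1 => X ^ 3 * derivative (g j) + X * g j

lemma g_zero : g 0 = 1 := rfl

lemma g_succ (j : ℕ) : g (j+1) = X ^ 3 * derivative (g j) + X * g j := rfl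

lemma g_one : g 1 = X := by
  rw [g_succ, g_zero]; simp

lemma g_rec (j n : ℕ) :
    (g (j+1)).coeff (n+3) = (g j).coeff (n+1) * ((n : ℤ)+1) + (g j).coeff (n+2) := by
  rw [g_succ, coeff_add, coeff_X_pow_mul, coeff_derivative,
    show n + 3 = (n+2)+1 from rfl, coeff_X_mul]

lemma g_rec2 (j : ℕ) : (g (j+1)).coeff 2 = (g j).coeff 1 := by
  rw [g_succ, coeff_add, coeff_X_pow_mul', show (2:ℕ) = 1+1 from rfl, coeff_X_mul]
  norm_num

lemma coeff_lt (j : ℕ) : ∀ k < j, (g j).coeff k = 0 := by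
  induction j with
  | zero => intro k hk; omega
  | succ j ih =>
    intro k hk
    match k with
    | 0 =>
      simp [g_succ, coeff_X_pow_mul', mul_coeff_zero]
    | 1 =>
      rw [g_succ, coeff_add, coeff_X_pow_mul', show (1:ℕ) = 0+1 from rfl, coeff_X_mul,
        ih 0 (by omega)]
      norm_num
    | 2 =>
      rw [g_rec2, ih 1 (by omega)]
    | (n+3) =>
      rw [g_rec, ih (n+1) (by omega), ih (n+2) (by omega)]
      ring

lemma coeff_ge (j : ℕ) : ∀ k, 2*(j+1) ≤ k → (g (j+1)).coeff k = 0 := by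
  induction j with
  | zero =>
    intro k hk
    rw [g_one, coeff_X]
    simp only [ite_eq_right_iff]
    omega
  | succ j ih =>
    intro k hk
    obtain ⟨n, rfl⟩ : ∃ n, k = n + 3 := ⟨k - 3, by omega⟩
    rw [g_rec, ih (n+1) (by omega), ih (n+2) (by omega)]
    ring

lemma fact_cast (n : ℕ) : ((n+1).factorial : ℤ) = ((n:ℤ)+1) * n.factorial := by
  rw [Nat.factorial_succ]; push_cast; ring

lemma g_main (j : ℕ) : ∀ i ≤ j,
    2 ^ i * (i.factorial : ℤ) * (((j - i).factorial : ℕ) : ℤ) *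
      (g (j+1)).coeff (j+1+i) = (((j + i).factorial : ℕ) : ℤ) := by
  induction j with
  | zero =>
    intro i hi
    interval_cases i
    simp [g_one]
  | succ j ih =>
    have hg1 : (g (j+1)).coeff (j+1) = 1 := by
      have h := ih 0 (Nat.zero_le _)
      simp only [pow_zero, Nat.factorial_zero, Nat.cast_one, one_mul, Nat.sub_zero,
        Nat.add_zero] at h
      have hne : ((j.factorial : ℤ)) ≠ 0 := by exact_mod_cast j.factorial_ne_zero
      exact mul_left_cancel₀ hne (by rw [h, mul_one])
    intro i hi
    match i, hi with
    | 0, _ =>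
      have hc : (g (j+1+1)).coeff (j+1+1+0) = 1 := by
        match j with
        | 0 => rw [show (0+1+1+0 : ℕ) = 2 from rfl, g_rec2, g_one, coeff_X_one]
        | m+1 =>
          rw [show (m+1+1+1+0 : ℕ) = m+3 from rfl, g_rec,
            coeff_lt (m+1+1) (m+1) (by omega),
            show (m+2 : ℕ) = m+1+1 from rfl, hg1]
          ring
      rw [hc]
      simp
    | i'+1, hi =>
      have h1 := ih i' (by omega)
      have hrec := g_rec (j+1) (j+i')
      rw [show j+1+1+(i'+1) = j+i'+3 by omega, hrec,
        show j+i'+1 = j+1+i' by omega, show j+i'+2 = j+1+(i'+1) by omega]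
      set a := (g (j+1)).coeff (j+1+i') with ha
      set b := (g (j+1)).coeff (j+1+(i'+1)) with hb
      rcases Nat.lt_or_ge i' j with hlt | hge
      · have h2 := ih (i'+1) (by omega)
        rw [← hb] at h2
        obtain ⟨d, rfl⟩ : ∃ d, j = i' + d + 1 := ⟨j - i' - 1, by omega⟩
        rw [show i'+d+1-i' = d+1 by omega, show i'+d+1+i' = (2*i'+d)+1 by omega] at h1
        rw [show i'+d+1-(i'+1) = d by omega,
          show i'+d+1+(i'+1) = (2*i'+d+1)+1 by omega] at h2
        rw [show i'+d+1+1-(i'+1) = d+1 by omega,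
          show i'+d+1+1+(i'+1) = (2*i'+d+2)+1 by omega,
          show (2*i'+d+2 : ℕ) = (2*i'+d+1)+1 from rfl,
          show (2*i'+d+1 : ℕ) = (2*i'+d)+1 from rfl]
        simp only [fact_cast, pow_succ] at h1 h2 ⊢
        push_cast at h1 h2 ⊢
        linear_combination (2*((i':ℤ)+1)*(2*i'+d+2)) * h1 + ((d:ℤ)+1) * h2
      · have hij : i' = j := by omega
        subst hij
        have h2 : b = 0 := by
          rw [hb]; exact coeff_ge i' _ (by omega)
        rw [h2]
        rw [show i'+i' = 2*i' by omega] at h1 ⊢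
        rw [show i'+1+(i'+1) = ((2*i')+1)+1 by omega]
        simp only [fact_cast, pow_succ, Nat.factorial_zero, Nat.cast_one] at h1 ⊢
        push_cast at h1 ⊢
        linear_combination (2*((i':ℤ)+1)*(2*(i':ℤ)+1)) * h1

theorem g_coeff_explicit (j k : ℕ) (hj : 1 ≤ j) (hjk : j < k) (hk : k ≤ 2 * j - 1) :
    2 ^ (k - j) * ((k - j).factorial : ℤ) * ((2 * j - k - 1).factorial : ℤ) *
        (g j).coeff k = ((k - 1).factorial : ℤ) := by
  obtain ⟨j', rfl⟩ : ∃ j', j = j' + 1 := ⟨j - 1, by omega⟩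
  obtain ⟨i, rfl⟩ : ∃ i, k = j' + 1 + i := ⟨k - (j' + 1), by omega⟩
  have hij : i ≤ j' := by omega
  have h := g_main j' i hij
  rw [show j'+1+i - (j'+1) = i by omega,
    show 2*(j'+1) - (j'+1+i) - 1 = j' - i by omega,
    show j'+1+i-1 = j'+i by omega]
  exact h
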